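/- Let H be an ICC group acting on a group N by automorphisms via α : H → Aut(N), and suppose that for every n ∈ N with n ≠ 1, the orbit {α(h)(n) : h ∈ H} is infinite. Then the semidirect product N ⋊_α H is ICC. -/
import Mathlib

/-- A group `K` is ICC if every nontrivial element has an infinite conjugacy class. -/
def IsICC (K : Type*) [Group K] : Prop :=
  ∀ k : K, k ≠ 1 → {x : K | ∃ y : K, y * k * y⁻¹ = x}.Infinite

/-- If an ICC group `H` acts on a group `N` by automorphisms `α : H → Aut(N)` such
that every nontrivial `n ∈ N` has infinite orbit `{α(h)(n) : h ∈ H}`, then the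
semidirect product `N ⋊_α H` is ICC. -/
theorem isICC_semidirectProduct (N H : Type*) [Group N] [Group H]
    (α : H →* MulAut N) (hH : IsICC H)
    (horb : ∀ n : N, n ≠ 1 → {m : N | ∃ h : H, α h n = m}.Infinite) :
    IsICC (N ⋊[α] H) := by
  intro k hk
  rcases eq_or_ne k.right 1 with hr | hr
  · -- k = inl k.left with k.left ≠ 1
    have hn : k.left ≠ 1 := by
      intro h
      exact hk (by ext <;> simp [h, hr])
    have hkeq : k = SemidirectProduct.inl k.left := by ext <;> simp [hr]
    have hinf := (horb k.left hn).image
      ((SemidirectProduct.inl_injective (φ := α)).injOn)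
    refine hinf.mono ?_
    rintro x ⟨m, ⟨g, hg⟩, rfl⟩
    refine ⟨SemidirectProduct.inr g, ?_⟩
    rw [hkeq, ← map_inv, ← SemidirectProduct.inl_aut, hg]
  · have hinf := hH k.right hr
    refine Set.Infinite.of_image SemidirectProduct.rightHom (hinf.mono ?_)
    rintro x ⟨y, rfl⟩
    refine ⟨SemidirectProduct.inr y * k * (SemidirectProduct.inr y)⁻¹, ⟨_, rfl⟩, ?_⟩
    simp [SemidirectProduct.rightHom]
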